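/- For every p ∈ ℝ³ with p ≠ 0, the kernel of the linear endomorphism of ℂ¹⁶ given by the matrix M⁻·p has dimension 8. -/

import Mathlib

noncomputable section
open MeasureTheory Matrix Complex Filter Topology
open scoped Kronecker ENNReal InnerProductSpace RealInnerProductSpace

/-- Pauli matrices -/
def σ1 : Matrix (Fin 2) (Fin 2) ℂ := !![0, 1; 1, 0]
def σ2 : Matrix (Fin 2) (Fin 2) ℂ := !![0, -I; I, 0]
def σ3 : Matrix (Fin 2) (Fin 2) ℂ := !![1, 0; 0, -1]

/-- Dirac alpha matrices in standard representation -/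
def diracAlpha' (s : Matrix (Fin 2) (Fin 2) ℂ) : Matrix (Fin 4) (Fin 4) ℂ :=
  Matrix.reindex finSumFinEquiv finSumFinEquiv (Matrix.fromBlocks 0 s s 0)

def diracAlpha : Fin 3 → Matrix (Fin 4) (Fin 4) ℂ
  | 0 => diracAlpha' σ1
  | 1 => diracAlpha' σ2
  | 2 => diracAlpha' σ3

def diracBeta : Matrix (Fin 4) (Fin 4) ℂ :=
  Matrix.reindex finSumFinEquiv finSumFinEquiv
    (Matrix.fromBlocks (1 : Matrix (Fin 2) (Fin 2) ℂ) 0 0 (-1 : Matrix (Fin 2) (Fin 2) ℂ))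

abbrev R3 := EuclideanSpace ℝ (Fin 3)
abbrev C16 := EuclideanSpace ℂ (Fin 16)

/-- α·p -/
def alphaDot (p : R3) : Matrix (Fin 4) (Fin 4) ℂ :=
  ∑ j : Fin 3, (p j : ℂ) • diracAlpha j

/-- reindexing 4×4 Kronecker products to 16×16 matrices -/
def kron16 (A B : Matrix (Fin 4) (Fin 4) ℂ) : Matrix (Fin 16) (Fin 16) ℂ :=
  Matrix.reindex finProdFinEquiv finProdFinEquiv (A ⊗ₖ B)

/-- M⁻·p -/
def Mminus (p : R3) : Matrix (Fin 16) (Fin 16) ℂ :=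
  kron16 (alphaDot p) 1 - kron16 1 (alphaDot p)

/-- P·M⁺ -/
def MplusDot (P : R3) : Matrix (Fin 16) (Fin 16) ℂ :=
  (2⁻¹ : ℂ) • (kron16 (alphaDot P) 1 + kron16 1 (alphaDot P))

/-- τ(p) -/
def tau (p : R3) : Matrix (Fin 16) (Fin 16) ℂ :=
  -((‖p‖ ^ 2 : ℝ) : ℂ)⁻¹ • kron16 (alphaDot p) (alphaDot p)

def Pplus (p : R3) : Matrix (Fin 16) (Fin 16) ℂ := (2⁻¹ : ℂ) • (1 + tau p)
def Pminus (p : R3) : Matrix (Fin 16) (Fin 16) ℂ := (2⁻¹ : ℂ) • (1 - tau p)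

def Bmat : Matrix (Fin 16) (Fin 16) ℂ := (2 : ℂ) • kron16 diracBeta diracBeta

/-! With `A = α·p` one has `A² = ‖p‖²` and `tr A = 0`. The matrices `L = A ⊗ 1` and `R = 1 ⊗ A`
commute and both square to `c = ‖p‖²`, so `(L - R)(c + LR) = 0`, while `LR` acts as `c` on
`ker (L - R)`. Hence `(c + LR)/(2c)` is a projection onto `ker (L - R)`, and the dimension of the
kernel is its trace `(16c + (tr A)²)/(2c) = 8`. -/

theorem Matrix.trace_reindex {m n R : Type*} [Fintype m] [Fintype n] [AddCommMonoid R]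
    (e : m ≃ n) (A : Matrix m m R) : (reindex e e A).trace = A.trace :=
  e.symm.sum_comp fun i => A i i

theorem Matrix.trace_fromBlocks {m n R : Type*} [Fintype m] [Fintype n] [AddCommMonoid R]
    (A : Matrix m m R) (B : Matrix m n R) (C : Matrix n m R) (D : Matrix n n R) :
    (fromBlocks A B C D).trace = A.trace + D.trace :=
  Fintype.sum_sum_type _

namespace Module.End

variable {K V : Type*} [Field K] [AddCommGroup V] [Module K V]

theorem isProj_ker_sub_of_commute {L R : Module.End K V} {c : K} (h2c : 2 * c ≠ 0)
    (hLR : Commute L R) (hL : L * L = c • 1) (hR : R * R = c • 1) :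
    LinearMap.IsProj (LinearMap.ker (L - R)) ((2 * c)⁻¹ • (c • 1 + L * R)) := by
  have hkill : (L - R) * (c • 1 + L * R) = 0 := by
    calc (L - R) * (c • 1 + L * R) = c • L - c • R + L * (L * R) - R * (L * R) := by
          simp only [sub_mul, mul_add, mul_smul_comm, mul_one]
          module
      _ = 0 := by
          rw [← mul_assoc L, ← mul_assoc R, ← hLR.eq, mul_assoc L R, hL, hR,
            smul_mul_assoc, mul_smul_comm, one_mul, mul_one]
          module
  refine ⟨fun x => ?_, fun x hx => ?_⟩
  · rw [LinearMap.mem_ker, LinearMap.smul_apply, map_smul, ← Module.End.mul_apply, hkill,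
      LinearMap.zero_apply, smul_zero]
  · have hLx : L x = R x := sub_eq_zero.mp hx
    have hLRx : (L * R) x = c • x := by
      rw [Module.End.mul_apply, ← hLx, ← Module.End.mul_apply, hL]; rfl
    rw [LinearMap.smul_apply, LinearMap.add_apply, hLRx, LinearMap.smul_apply,
      Module.End.one_apply, ← add_smul, smul_smul, ← two_mul, inv_mul_cancel₀ h2c, one_smul]

theorem finrank_ker_sub_of_commute [FiniteDimensional K V] {L R : Module.End K V} {c : K}
    (h2c : 2 * c ≠ 0) (hLR : Commute L R) (hL : L * L = c • 1) (hR : R * R = c • 1) :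
    (Module.finrank K (LinearMap.ker (L - R)) : K) =
      (2 * c)⁻¹ * (c * Module.finrank K V + LinearMap.trace K V (L * R)) := by
  rw [← (isProj_ker_sub_of_commute h2c hLR hL hR).trace, map_smul, map_add, map_smul,
    LinearMap.trace_one, smul_eq_mul, smul_eq_mul]

end Module.End

theorem Matrix.finrank_ker_toLin_sub_of_commute {K V ι : Type*} [Field K] [AddCommGroup V]
    [Module K V] [Fintype ι] [DecidableEq ι] (b : Module.Basis ι K V) {L R : Matrix ι ι K}
    {c : K} (h2c : 2 * c ≠ 0) (hLR : Commute L R) (hL : L * L = c • 1) (hR : R * R = c • 1) :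
    (Module.finrank K (LinearMap.ker (toLin b b (L - R))) : K) =
      (2 * c)⁻¹ * (c * Fintype.card ι + (L * R).trace) := by
  have := b.finiteDimensional_of_finite
  have key := Module.End.finrank_ker_sub_of_commute h2c (hLR.map (toLinAlgEquiv b))
    (by rw [← map_mul, hL, map_smul, map_one]) (by rw [← map_mul, hR, map_smul, map_one])
  have htrace : LinearMap.trace K V (toLinAlgEquiv b (L * R)) = (L * R).trace := by
    rw [LinearMap.trace_eq_matrix_trace K b]
    exact congrArg Matrix.trace (LinearMap.toMatrix_toLin b b _)
  rwa [← map_sub, ← map_mul, htrace, Module.finrank_eq_card_basis b] at key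

theorem kron16_eq_reindexAlgEquiv (A B : Matrix (Fin 4) (Fin 4) ℂ) :
    kron16 A B = reindexAlgEquiv ℂ ℂ finProdFinEquiv (A ⊗ₖ B) :=
  rfl

theorem kron16_mul (A B C D : Matrix (Fin 4) (Fin 4) ℂ) :
    kron16 A B * kron16 C D = kron16 (A * C) (B * D) := by
  rw [kron16_eq_reindexAlgEquiv, kron16_eq_reindexAlgEquiv, ← map_mul, ← mul_kronecker_mul]
  rfl

theorem trace_kron16 (A B : Matrix (Fin 4) (Fin 4) ℂ) :
    (kron16 A B).trace = A.trace * B.trace := by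
  rw [kron16, trace_reindex, trace_kronecker]

theorem finrank_ker_toEuclideanLin_kron16_sub {A : Matrix (Fin 4) (Fin 4) ℂ} {c : ℂ}
    (hc : c ≠ 0) (hA : A * A = c • 1) (htr : A.trace = 0) :
    Module.finrank ℂ (LinearMap.ker (toEuclideanLin (kron16 A 1 - kron16 1 A))) = 8 := by
  have hcomm : Commute (kron16 A 1) (kron16 1 A) := by
    rw [Commute, SemiconjBy, kron16_mul, kron16_mul, mul_one, one_mul]
  have hL : kron16 A 1 * kron16 A 1 = c • 1 := by
    rw [kron16_mul, hA, mul_one, kron16_eq_reindexAlgEquiv, smul_kronecker, one_kronecker_one,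
      map_smul, map_one]
  have hR : kron16 1 A * kron16 1 A = c • 1 := by
    rw [kron16_mul, hA, mul_one, kron16_eq_reindexAlgEquiv, kronecker_smul, one_kronecker_one,
      map_smul, map_one]
  have h := Matrix.finrank_ker_toLin_sub_of_commute (EuclideanSpace.basisFun (Fin 16) ℂ).toBasis
    (mul_ne_zero two_ne_zero hc) hcomm hL hR
  rw [kron16_mul, mul_one, one_mul, trace_kron16, htr, mul_zero, add_zero,
    Fintype.card_fin] at h
  have h8 : (2 * c)⁻¹ * (c * ((16 : ℕ) : ℂ)) = (8 : ℕ) := by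
    field_simp
    norm_num
  rw [toEuclideanLin_eq_toLin_orthonormal]
  exact_mod_cast h.trans h8

theorem diracAlpha'_eq_reindexAlgEquiv (s : Matrix (Fin 2) (Fin 2) ℂ) :
    diracAlpha' s = reindexAlgEquiv ℂ ℂ finSumFinEquiv (fromBlocks 0 s s 0) :=
  rfl

theorem diracAlpha'_mul_self {s : Matrix (Fin 2) (Fin 2) ℂ} {c : ℂ} (hs : s * s = c • 1) :
    diracAlpha' s * diracAlpha' s = c • 1 := by
  have hblocks :
      fromBlocks (c • 1) 0 0 (c • 1) = (c • 1 : Matrix (Fin 2 ⊕ Fin 2) (Fin 2 ⊕ Fin 2) ℂ) := by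
    rw [← fromBlocks_one, fromBlocks_smul, smul_zero]
  rw [diracAlpha'_eq_reindexAlgEquiv, ← map_mul, fromBlocks_multiply]
  simp only [hs, Matrix.mul_zero, Matrix.zero_mul, add_zero, zero_add]
  rw [hblocks, map_smul, map_one]

theorem trace_diracAlpha' (s : Matrix (Fin 2) (Fin 2) ℂ) : (diracAlpha' s).trace = 0 := by
  rw [diracAlpha', trace_reindex, trace_fromBlocks, trace_zero, add_zero]

def pauliDot (p : R3) : Matrix (Fin 2) (Fin 2) ℂ :=
  (p 0 : ℂ) • σ1 + (p 1 : ℂ) • σ2 + (p 2 : ℂ) • σ3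

theorem alphaDot_eq_diracAlpha'_pauliDot (p : R3) : alphaDot p = diracAlpha' (pauliDot p) := by
  simp only [alphaDot, Fin.sum_univ_three, diracAlpha, pauliDot, diracAlpha'_eq_reindexAlgEquiv,
    ← map_smul, ← map_add, fromBlocks_smul, fromBlocks_add, smul_zero, add_zero]

theorem pauliDot_mul_self (p : R3) : pauliDot p * pauliDot p = ((‖p‖ ^ 2 : ℝ) : ℂ) • 1 := by
  have hnorm : ‖p‖ ^ 2 = p 0 ^ 2 + p 1 ^ 2 + p 2 ^ 2 := by
    rw [EuclideanSpace.norm_sq_eq, Fin.sum_univ_three]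
    simp only [Real.norm_eq_abs, sq_abs]
  rw [hnorm]
  ext i j
  fin_cases i <;> fin_cases j <;> simp [pauliDot, σ1, σ2, σ3, Matrix.mul_apply] <;> ring_nf <;>
    simp [I_sq]

theorem alphaDot_mul_self (p : R3) : alphaDot p * alphaDot p = ((‖p‖ ^ 2 : ℝ) : ℂ) • 1 := by
  rw [alphaDot_eq_diracAlpha'_pauliDot, diracAlpha'_mul_self (pauliDot_mul_self p)]

theorem trace_alphaDot (p : R3) : (alphaDot p).trace = 0 := by
  rw [alphaDot_eq_diracAlpha'_pauliDot, trace_diracAlpha']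

/-- STATEMENT 2: for `p ≠ 0`, the kernel of the linear endomorphism of `ℂ¹⁶` given by the
matrix `M⁻·p` has dimension `8`. -/
theorem stmt2 (p : R3) (hp : p ≠ 0) :
    Module.finrank ℂ (LinearMap.ker (Matrix.toEuclideanLin (Mminus p))) = 8 :=
  finrank_ker_toEuclideanLin_kron16_sub (by simpa using hp) (alphaDot_mul_self p)
    (trace_alphaDot p)
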